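/- In the induction step for resolution on a deleted pivot in Proposition 3: if Q̂₁.φ₁ ≡_sat Q̂₁.(φ₁ ∨ C₁') and Q̂₁.φ₁ ≡_sat Q̂₁.(φ₁ ∨ C₂') for non-contradictory cubes C₁', C₂' over the variables of Q̂₁ such that C₁' ∪ C₂' contains no complementary pair of literals, then Q̂₁.φ₁ ≡_sat Q̂₁.(φ₁ ∨ (C₁' ∧ C₂')). -/

import Mathlib

/-- Variables are natural numbers. -/
abbrev Var := Nat

/-- A literal: a variable with a polarity (`pos = true` means positive). -/
structure Lit where
  var : Var
  pos : Bool
deriving DecidableEq, Repr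

abbrev Clause := List Lit
abbrev Cube := List Lit
abbrev CNF := List Clause

abbrev Assignment := Var → Bool

def Lit.eval (α : Assignment) (l : Lit) : Bool :=
  if l.pos then α l.var else !(α l.var)

def Clause.eval (α : Assignment) (C : Clause) : Bool := C.any (Lit.eval α)

def Cube.evalCube (α : Assignment) (C : Cube) : Bool := C.all (Lit.eval α)

def CNF.eval (α : Assignment) (φ : CNF) : Bool := φ.all (Clause.eval α)

/-- A flat quantifier prefix: list of (quantifier, variable); `true` = ∃, `false` = ∀. -/
abbrev QPrefix := List (Bool × Var)

/-- Recursive semantics of closed prenex QBFs, relative to an ambient assignment `α`. -/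
def QSat (α : Assignment) : QPrefix → (Assignment → Bool) → Prop
  | [], m => m α = true
  | (true, x) :: p, m => ∃ b, QSat (Function.update α x b) p m
  | (false, x) :: p, m => ∀ b, QSat (Function.update α x b) p m

/-- Satisfiability of a closed prenex formula. -/
def Sat (L : QPrefix) (m : Assignment → Bool) : Prop :=
  QSat (fun _ => false) L m

def pvars (L : QPrefix) : List Var := L.map Prod.snd

/-- The quantifier of a variable in the prefix (`true` = ∃). -/
def quantOf (L : QPrefix) (x : Var) : Bool :=
  ((L.find? (fun p => p.2 == x)).map Prod.fst).getD true

/-- Position of a variable in the linear prefix ordering. -/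
def varIdx (L : QPrefix) (x : Var) : Nat := (pvars L).idxOf x

def Clause.vars (C : Clause) : List Var := C.map Lit.var
def CNF.vars (φ : CNF) : List Var := φ.flatMap Clause.vars

/-- A closed PCNF: all matrix variables are quantified, and no variable twice. -/
def Closed (L : QPrefix) (φ : CNF) : Prop :=
  (∀ v ∈ CNF.vars φ, v ∈ pvars L) ∧ (pvars L).Nodup

def existLits (L : QPrefix) (C : List Lit) : List Lit :=
  C.filter (fun l => quantOf L l.var)

def univLits (L : QPrefix) (C : List Lit) : List Lit :=
  C.filter (fun l => !(quantOf L l.var))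

/-- Universal reduction of a clause: remove universal literals larger than all
existential literals of the clause. -/
def univRed (L : QPrefix) (C : Clause) : Clause :=
  C.filter (fun l =>
    !((!(quantOf L l.var)) &&
      (existLits L C).all (fun l' => decide (varIdx L l'.var < varIdx L l.var))))

/-- Existential reduction of a cube: remove existential literals larger than all
universal literals of the cube. -/
def exRed (L : QPrefix) (C : Cube) : Cube :=
  C.filter (fun l =>
    !((quantOf L l.var) &&
      (univLits L C).all (fun l' => decide (varIdx L l'.var < varIdx L l.var))))

def Lit.neg (l : Lit) : Lit := ⟨l.var, !l.pos⟩

/-- Tautological clause / contradictory cube: contains complementary literals. -/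
def Tauto (C : List Lit) : Prop := ∃ l ∈ C, Lit.neg l ∈ C

/-- Tentative Q-qResolvent of two clauses on existential pivot `p`. -/
def qResolvent (L : QPrefix) (C₁ C₂ : Clause) (p : Var) : Clause :=
  (univRed L C₁).filter (fun l => l ≠ ⟨p, true⟩) ++
  (univRed L C₂).filter (fun l => l ≠ ⟨p, false⟩)

/-- Q-resolution derivations from the clauses of `φ`. -/
inductive QDer (L : QPrefix) (φ : CNF) : Clause → Prop
  | ax {C} : C ∈ φ → QDer L φ C
  | ur {C} : QDer L φ C → QDer L φ (univRed L C)
  | res {C₁ C₂} {p : Var} :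
      QDer L φ C₁ → QDer L φ C₂ →
      ¬ Tauto C₁ → ¬ Tauto C₂ →
      quantOf L p = true → (⟨p, true⟩ : Lit) ∈ C₁ → (⟨p, false⟩ : Lit) ∈ C₂ →
      ¬ Tauto (qResolvent L C₁ C₂ p) →
      QDer L φ (qResolvent L C₁ C₂ p)

/-- The initial cube of a (total) model `α`: conjunction of the literals set by `α`,
in prefix order. -/
def initCube (L : QPrefix) (α : Assignment) : Cube :=
  L.map (fun p => ⟨p.2, α p.2⟩)

/-- Tentative cube qResolvent of two cubes on universal pivot `x`. -/
def cubeResolvent (L : QPrefix) (C₁ C₂ : Cube) (x : Var) : Cube :=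
  (exRed L C₁).filter (fun l => l ≠ ⟨x, true⟩) ++
  (exRed L C₂).filter (fun l => l ≠ ⟨x, false⟩)

/-- Cube derivations: model generation rule, existential reduction, cube resolution. -/
inductive CubeDer (L : QPrefix) (φ : CNF) : Cube → Prop
  | init (α : Assignment) : CNF.eval α φ = true → CubeDer L φ (initCube L α)
  | er {C} : CubeDer L φ C → CubeDer L φ (exRed L C)
  | res {C₁ C₂} {x : Var} :
      CubeDer L φ C₁ → CubeDer L φ C₂ →
      ¬ Tauto C₁ → ¬ Tauto C₂ →
      quantOf L x = false → (⟨x, true⟩ : Lit) ∈ C₁ → (⟨x, false⟩ : Lit) ∈ C₂ →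
      ¬ Tauto (cubeResolvent L C₁ C₂ x) →
      CubeDer L φ (cubeResolvent L C₁ C₂ x)

/-- Block-structured prefix: list of (quantifier, block of variables). -/
abbrev BPrefix := List (Bool × List Var)

def flatP (P : BPrefix) : QPrefix := P.flatMap (fun b => b.2.map (fun x => (b.1, x)))

def SatB (P : BPrefix) (m : Assignment → Bool) : Prop := Sat (flatP P) m

/-- Closed PCNF with block prefix. -/
def ClosedB (P : BPrefix) (φ : CNF) : Prop :=
  (∀ v ∈ CNF.vars φ, v ∈ pvars (flatP P)) ∧
  (∀ v ∈ pvars (flatP P), v ∈ CNF.vars φ) ∧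
  (pvars (flatP P)).Nodup

/-! Strengthening the cube `C₁` to `C₁ ∧ C₂` only shrinks the matrix `φ ∨ C₁`, and the
semantics of a prefix is monotone in the matrix; so satisfiability of `φ ∨ (C₁ ∧ C₂)` gives
that of `φ ∨ C₁`, hence of `φ` by the first hypothesis. The converse is monotonicity again. -/

theorem QSat.mono {m m' : Assignment → Bool} (h : ∀ α, m α = true → m' α = true) :
    ∀ {L : QPrefix} {α : Assignment}, QSat α L m → QSat α L m'
  | [], α, hq => h α hq
  | (true, _) :: _, _, ⟨b, hb⟩ => ⟨b, QSat.mono h hb⟩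
  | (false, _) :: _, _, hq => fun b => QSat.mono h (hq b)

theorem Sat.mono {L : QPrefix} {m m' : Assignment → Bool}
    (h : ∀ α, m α = true → m' α = true) (hs : Sat L m) : Sat L m' :=
  QSat.mono h hs

theorem Cube.evalCube_append (α : Assignment) (C₁ C₂ : Cube) :
    Cube.evalCube α (C₁ ++ C₂) = (Cube.evalCube α C₁ && Cube.evalCube α C₂) :=
  List.all_append

theorem deleted_pivot_conjunction_general (L : QPrefix) (φ : CNF) (C₁ C₂ : Cube)
    (h1 : Sat L (fun α => CNF.eval α φ) ↔ Sat L (fun α => CNF.eval α φ || Cube.evalCube α (C₁))) :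
    Sat L (fun α => CNF.eval α φ) ↔ Sat L (fun α => CNF.eval α φ || Cube.evalCube α (C₁ ++ C₂)) := by
  refine ⟨Sat.mono fun α h => by simp [h], fun hs => h1.mpr (Sat.mono (fun α h => ?_) hs)⟩
  simp only [Cube.evalCube_append, Bool.or_eq_true, Bool.and_eq_true] at h ⊢
  exact h.imp_right And.left

/-- induction step of Proposition 3 for resolution on a deleted
pivot: the conjunction of two sound cubes with no complementary literals is sound. -/
theorem deleted_pivot_conjunction (L : QPrefix) (φ : CNF) (C₁ C₂ : Cube)
    (hv1 : ∀ l ∈ C₁, l.var ∈ pvars L) (hv2 : ∀ l ∈ C₂, l.var ∈ pvars L)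
    (ht1 : ¬ Tauto C₁) (ht2 : ¬ Tauto C₂)
    (hnc : ¬ Tauto (C₁ ++ C₂))
    (h1 : Sat L (fun α => CNF.eval α φ) ↔ Sat L (fun α => CNF.eval α φ || Cube.evalCube α (C₁)))
    (h2 : Sat L (fun α => CNF.eval α φ) ↔ Sat L (fun α => CNF.eval α φ || Cube.evalCube α (C₂))) :
    Sat L (fun α => CNF.eval α φ) ↔ Sat L (fun α => CNF.eval α φ || Cube.evalCube α (C₁ ++ C₂)) :=
  deleted_pivot_conjunction_general L φ C₁ C₂ h1
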